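/- arXiv:math/0601084 — 2 statements merged into one kernel-verified Lean document; each statement's English description precedes it below -/
import Mathlib

section
/- Let P be a d-dimensional polyhedron in ℝ^d (with vertex-set in a standard periodic set Λ), let U be the linear subspace of all Q ∈ S^d satisfying ⟨N_{V,w}, Q⟩ = 0 for all affinely independent sets V ⊆ vert P of cardinality d+1 and all w ∈ vert P, and let F be a facet of P. If V and V' are two affinely independent subsets of vert F of cardinality d, w ∈ vert P \ F, and w' ∈ ℝ^d, then the orthogonal projections onto U satisfy π_U(N_{V∪{w},w'}) = π_U(N_{V'∪{w},w'}). -/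
open Matrix Finset MeasureTheory Polynomial

noncomputable section

namespace Vor

variable {d : ℕ}

/-- The space of real `d × d` matrices (quadratic forms live in the symmetric ones). -/
abbrev Md (d : ℕ) := Matrix (Fin d) (Fin d) ℝ

/-- Trace inner product `⟨A, B⟩ = trace (A * B)` on matrices. -/
def minner (A B : Md d) : ℝ := (A * B).trace

/-- The quadratic form `Q[x] = xᵗ Q x`. -/
def qf (Q : Md d) (x : Fin d → ℝ) : ℝ := x ⬝ᵥ Q.mulVec x

/-- The real vector associated to an integral vector. -/
def intVec (v : Fin d → ℤ) : Fin d → ℝ := fun j => (v j : ℝ)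

/-- The lattice `ℤ^d` viewed inside `ℝ^d`. -/
def latticeZ (d : ℕ) : Set (Fin d → ℝ) := Set.range (intVec (d := d))

/-- A standard periodic set `Λ = ⋃ i, (tᵢ + ℤ^d)`. -/
def IsStdPeriodic (Λ : Set (Fin d → ℝ)) : Prop :=
  ∃ m : ℕ, 0 < m ∧ ∃ t : Fin m → (Fin d → ℝ),
    Λ = {x | ∃ (i : Fin m) (v : Fin d → ℤ), x = t i + intVec v}

/-- The real matrix obtained from an integral matrix. -/
def rmat (U : Matrix (Fin d) (Fin d) ℤ) : Md d := U.map fun z => (z : ℝ)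

/-- `U ∈ GL_d(ℤ)`. -/
def IsUnimodular (U : Matrix (Fin d) (Fin d) ℤ) : Prop := IsUnit U.det

/-- The action `Q ↦ Uᵗ Q U`. -/
def conjQ (U : Matrix (Fin d) (Fin d) ℤ) (Q : Md d) : Md d := (rmat U)ᵀ * Q * rmat U

/-- The action of `GL_d(ℤ)` on subsets of the space of forms. -/
def conjSet (U : Matrix (Fin d) (Fin d) ℤ) (S : Set (Md d)) : Set (Md d) := conjQ U '' S

/-- The rational closure `S̃^d_{≥0}`: positive semidefinite forms that are
`GL_d(ℤ)`-equivalent to a block diagonal form with a zero block and a positive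
definite block. -/
def RationalClosure (d : ℕ) : Set (Md d) :=
  {Q | Q.PosSemidef ∧ ∃ U : Matrix (Fin d) (Fin d) ℤ, IsUnimodular U ∧ ∃ k : ℕ, k ≤ d ∧
    (∀ i j : Fin d, ((i : ℕ) < k ∨ (j : ℕ) < k) → conjQ U Q i j = 0) ∧
    (∀ x : Fin d → ℝ, (∀ i : Fin d, (i : ℕ) < k → x i = 0) → x ≠ 0 → 0 < qf (conjQ U Q) x)}

/-- `P` is a Delone polyhedron of the form `Q` with respect to the point set `Λ`:
`P` is the convex hull of the set `S` of points of `Λ` lying on some sphere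
(center `c`, radius `r`) which contains no other point of `Λ` on it or inside. -/
def IsDelonePoly (Λ : Set (Fin d → ℝ)) (Q : Md d) (P : Set (Fin d → ℝ)) : Prop :=
  ∃ S : Set (Fin d → ℝ), S ⊆ Λ ∧ S.Nonempty ∧ P = convexHull ℝ S ∧
    ∃ (c : Fin d → ℝ) (r : ℝ),
      (∀ v ∈ S, qf Q (c - v) = r ^ 2) ∧ ∀ v ∈ Λ, v ∉ S → r ^ 2 < qf Q (c - v)

/-- The Delone subdivision of `Q` with respect to `Λ`. -/
def DelSub (Λ : Set (Fin d → ℝ)) (Q : Md d) : Set (Set (Fin d → ℝ)) :=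
  {P | IsDelonePoly Λ Q P}

/-- The secondary cone of a (Delone) subdivision `D`:
all forms in the rational closure whose Delone subdivision is `D`. -/
def SecCone (Λ : Set (Fin d → ℝ)) (D : Set (Set (Fin d → ℝ))) : Set (Md d) :=
  {Q | Q ∈ RationalClosure d ∧ DelSub Λ Q = D}

/-- `α` gives the coefficients of an affine combination of the points of `V` representing `w`. -/
def IsAffComb (V : Finset (Fin d → ℝ)) (α : (Fin d → ℝ) → ℝ) (w : Fin d → ℝ) : Prop :=
  (∑ v ∈ V, α v) = 1 ∧ (∑ v ∈ V, α v • v) = w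

/-- The form `N_{V,w} = wwᵗ - ∑_{v ∈ V} α_v vvᵗ`. -/
def Nform (V : Finset (Fin d → ℝ)) (α : (Fin d → ℝ) → ℝ) (w : Fin d → ℝ) : Md d :=
  vecMulVec w w - ∑ v ∈ V, α v • vecMulVec v v

/-- A finite set of points is affinely independent. -/
def AffIndep (V : Finset (Fin d → ℝ)) : Prop :=
  AffineIndependent ℝ (fun v : {x // x ∈ V} => (v : Fin d → ℝ))

/-- Insertion into a finset (classical, to avoid decidability assumptions). -/
def finsert (w : Fin d → ℝ) (V : Finset (Fin d → ℝ)) : Finset (Fin d → ℝ) :=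
  letI := Classical.decEq (Fin d → ℝ)
  insert w V

/-- A polyhedron: a finite intersection of closed halfspaces. -/
def IsPolyhedron (P : Set (Fin d → ℝ)) : Prop :=
  ∃ (n : ℕ) (a : Fin n → (Fin d → ℝ)) (b : Fin n → ℝ), P = {x | ∀ i, a i ⬝ᵥ x ≤ b i}

/-- `F` is a face of `P` (cut out by a supporting hyperplane). -/
def IsFaceOf (F P : Set (Fin d → ℝ)) : Prop :=
  ∃ (a : Fin d → ℝ) (b : ℝ), (∀ x ∈ P, a ⬝ᵥ x ≤ b) ∧ F = {x ∈ P | a ⬝ᵥ x = b}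

/-- The (affine) dimension of a set of points. -/
def sdim (S : Set (Fin d → ℝ)) : ℕ := Module.finrank ℝ ↥(vectorSpan ℝ S)

/-- A (face-to-face) polyhedral subdivision of `ℝ^d`. -/
def IsPolySubdiv (D : Set (Set (Fin d → ℝ))) : Prop :=
  (∀ P ∈ D, IsPolyhedron P ∧ P.Nonempty) ∧
  ⋃₀ D = Set.univ ∧
  (∀ P ∈ D, ∀ F : Set (Fin d → ℝ), IsFaceOf F P → F.Nonempty → F ∈ D) ∧
  ∀ P ∈ D, ∀ P' ∈ D, (P ∩ P').Nonempty → IsFaceOf (P ∩ P') P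

/-- `D` has vertex-set `Λ`: every member is the convex hull of its points of `Λ`. -/
def HasVertexSet (Λ : Set (Fin d → ℝ)) (D : Set (Set (Fin d → ℝ))) : Prop :=
  ∀ P ∈ D, P = convexHull ℝ (Λ ∩ P)

/-- A (closed) polyhedral cone in the space of matrices. -/
def IsPolyConeM (C : Set (Md d)) : Prop :=
  ∃ (n : ℕ) (A : Fin n → Md d), C = {Q | ∀ i, 0 ≤ minner (A i) Q}

/-- `F` is a face of the cone `C` in the space of matrices. -/
def IsFaceOfM (F C : Set (Md d)) : Prop :=
  ∃ A : Md d, (∀ X ∈ C, 0 ≤ minner A X) ∧ F = {X ∈ C | minner A X = 0}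

/-- A relatively open polyhedral cone: solutions of finitely many linear equalities and
strict linear inequalities. -/
def IsRelOpenPolyCone (C : Set (Md d)) : Prop :=
  ∃ (n m : ℕ) (A : Fin n → Md d) (B : Fin m → Md d),
    C = {Q | (∀ i, minner (A i) Q = 0) ∧ ∀ j, 0 < minner (B j) Q}

/-- Condition (a): the linear equalities coming from the `d`-dimensional cells of `D`. -/
def condA (Λ : Set (Fin d → ℝ)) (D : Set (Set (Fin d → ℝ))) (Q : Md d) : Prop :=
  ∀ P ∈ D, sdim P = d →
    ∀ V : Finset (Fin d → ℝ), (↑V : Set (Fin d → ℝ)) ⊆ Λ ∩ P → AffIndep V → V.card = d + 1 →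
      ∀ w ∈ Λ ∩ P, ∀ α : (Fin d → ℝ) → ℝ, IsAffComb V α w →
        minner (Nform V α w) Q = 0

/-- Condition (b): the linear strict inequalities coming from the `(d-1)`-dimensional
cells of `D`. -/
def condB (Λ : Set (Fin d → ℝ)) (D : Set (Set (Fin d → ℝ))) (Q : Md d) : Prop :=
  ∀ F ∈ D, sdim F = d - 1 →
    ∀ P ∈ D, ∀ P' ∈ D, sdim P = d → sdim P' = d → P ≠ P' → F = P ∩ P' →
      ∀ V : Finset (Fin d → ℝ), (↑V : Set (Fin d → ℝ)) ⊆ Λ ∩ F → AffIndep V → V.card = d →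
        ∀ w ∈ (Λ ∩ P) \ F, ∀ w' ∈ (Λ ∩ P') \ F,
          ∀ α : (Fin d → ℝ) → ℝ, IsAffComb (finsert w V) α w' →
            0 < minner (Nform (finsert w V) α w') Q

/-- The lifting map `w_Q(x) = (x, Q[x]) ∈ ℝ^{d+1}`. -/
def liftQ (Q : Md d) (x : Fin d → ℝ) : Fin (d + 1) → ℝ := Fin.snoc x (qf Q x)

/-- Projection `ℝ^{d+1} → ℝ^d` onto the first `d` coordinates. -/
def projd (y : Fin (d + 1) → ℝ) : Fin d → ℝ := fun i => y i.castSucc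

/-- `G` is a finite subgroup of `GL_d(ℤ)` (given as a set of integral matrices). -/
def IsFinMatGroup (G : Set (Matrix (Fin d) (Fin d) ℤ)) : Prop :=
  G.Finite ∧ (1 : Matrix (Fin d) (Fin d) ℤ) ∈ G ∧ (∀ g ∈ G, IsUnimodular g) ∧
    (∀ g ∈ G, ∀ h ∈ G, g * h ∈ G) ∧ ∀ g ∈ G, g⁻¹ ∈ G

/-- The space of invariant forms `F(G)` of `G ≤ GL_d(ℤ)`. -/
def FG (G : Set (Matrix (Fin d) (Fin d) ℤ)) : Set (Md d) :=
  {Q | Q.IsSymm ∧ ∀ g ∈ G, conjQ g Q = Q}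

/-- The Bravais group `B(G)`: the pointwise stabilizer of `F(G)` in `GL_d(ℤ)`. -/
def BG (G : Set (Matrix (Fin d) (Fin d) ℤ)) : Set (Matrix (Fin d) (Fin d) ℤ) :=
  {g | IsUnimodular g ∧ ∀ Q ∈ FG G, conjQ g Q = Q}

/-- The normalizer `N(B(G))` of the Bravais group in `GL_d(ℤ)`. -/
def NBG (G : Set (Matrix (Fin d) (Fin d) ℤ)) : Set (Matrix (Fin d) (Fin d) ℤ) :=
  {n | IsUnimodular n ∧ ∀ b : Matrix (Fin d) (Fin d) ℤ, b ∈ BG G ↔ n⁻¹ * b * n ∈ BG G}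

/-- The inhomogeneous minimum `μ(Q) = sup_x inf_{v ∈ ℤ^d} Q[x - v]`. -/
def InhomMin (Q : Md d) : ℝ :=
  ⨆ x : Fin d → ℝ, ⨅ v : Fin d → ℤ, qf Q (x - intVec v)

/-- The bilinear form `(x, y) = xᵗ Q y` associated to `Q`. -/
def bip (Q : Md d) (x y : Fin d → ℝ) : ℝ := x ⬝ᵥ Q.mulVec y

/-- `F` is a facet of the subdivision `D`: a `(d-1)`-dimensional cell, the intersection of
two adjacent `d`-dimensional cells. -/
def IsFacetOfSubdiv (D : Set (Set (Fin d → ℝ))) (F : Set (Fin d → ℝ)) : Prop :=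
  F ∈ D ∧ sdim F = d - 1 ∧
    ∃ P ∈ D, ∃ P' ∈ D, sdim P = d ∧ sdim P' = d ∧ P ≠ P' ∧ F = P ∩ P'

/-- The linear subspace `U` of forms satisfying all equalities of the secondary cone of `D`. -/
def UD (Λ : Set (Fin d → ℝ)) (D : Set (Set (Fin d → ℝ))) : Set (Md d) :=
  {X | X.IsSymm ∧ condA Λ D X}

/-- `ND` assigns to each facet `F` of `D` the form `N_{D,F}`: the unit-norm form in `U`
such that the projection onto `U` of every form `N_{V∪{w},w'}` attached to `F` is a
positive multiple of it. -/
def IsNDassign (Λ : Set (Fin d → ℝ)) (D : Set (Set (Fin d → ℝ)))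
    (ND : Set (Fin d → ℝ) → Md d) : Prop :=
  ∀ F, IsFacetOfSubdiv D F → ND F ∈ UD Λ D ∧ minner (ND F) (ND F) = 1 ∧
    ∀ P ∈ D, ∀ P' ∈ D, sdim P = d → sdim P' = d → P ≠ P' → F = P ∩ P' →
      ∀ V : Finset (Fin d → ℝ), (↑V : Set (Fin d → ℝ)) ⊆ Λ ∩ F → AffIndep V → V.card = d →
        ∀ w ∈ (Λ ∩ P) \ F, ∀ w' ∈ (Λ ∩ P') \ F,
          ∀ α : (Fin d → ℝ) → ℝ, IsAffComb (finsert w V) α w' →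
            ∃ β : ℝ, 0 < β ∧ ∀ X ∈ UD Λ D,
              minner (Nform (finsert w V) α w') X = β * minner (ND F) X

/-- The set `R_F` of facets of `D` whose form `N_{D,F'}` projects onto `T` to a positive
multiple of `NF`. -/
def RFset (Λ : Set (Fin d → ℝ)) (D : Set (Set (Fin d → ℝ)))
    (ND : Set (Fin d → ℝ) → Md d) (T : Set (Md d)) (NF : Md d) :
    Set (Set (Fin d → ℝ)) :=
  {F | IsFacetOfSubdiv D F ∧ ∃ γ : ℝ, 0 < γ ∧ ∀ X ∈ T, minner (ND F) X = γ * minner NF X}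

/-- The chain relation on the facets of `R_F`: connected by a chain of adjacent
`d`-dimensional cells of `D`. -/
def FlipRel (D RFs : Set (Set (Fin d → ℝ))) (F1 F2 : Set (Fin d → ℝ)) : Prop :=
  ∃ (n : ℕ) (Fch : Fin (n + 1) → Set (Fin d → ℝ)) (Pch : Fin (n + 2) → Set (Fin d → ℝ)),
    Fch 0 = F1 ∧ Fch (Fin.last n) = F2 ∧ (∀ i, Fch i ∈ RFs) ∧
    ∀ i : Fin (n + 1), Pch i.castSucc ∈ D ∧ Pch i.succ ∈ D ∧
      sdim (Pch i.castSucc) = d ∧ sdim (Pch i.succ) = d ∧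
      Fch i = Pch i.castSucc ∩ Pch i.succ

/-- `C` is an equivalence class of the chain relation on `RFs`. -/
def IsEqClass (D RFs C : Set (Set (Fin d → ℝ))) : Prop :=
  C ⊆ RFs ∧ C.Nonempty ∧ ∀ F1 ∈ C, ∀ F2 ∈ RFs, (FlipRel D RFs F1 F2 ↔ F2 ∈ C)

/-- The vertex set `V_C` of an equivalence class `C`: all vertices of `d`-dimensional
cells of `D` having a facet in `C`. -/
def VCset (Λ : Set (Fin d → ℝ)) (D C : Set (Set (Fin d → ℝ))) : Set (Fin d → ℝ) :=
  {x | ∃ P ∈ D, sdim P = d ∧ (∃ F ∈ C, IsFaceOf F P) ∧ x ∈ Λ ∩ P}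

/-- A lower facet of a set in `ℝ^{d+1}`: a facet whose outer normal has negative last
coordinate. -/
def IsLowerFacet (S F : Set (Fin (d + 1) → ℝ)) : Prop :=
  ∃ (a : Fin (d + 1) → ℝ) (b : ℝ), (∀ x ∈ S, a ⬝ᵥ x ≤ b) ∧ F = {x ∈ S | a ⬝ᵥ x = b} ∧
    Module.finrank ℝ ↥(vectorSpan ℝ F) = d ∧ a (Fin.last d) < 0

/-- An upper facet of a set in `ℝ^{d+1}`: a facet whose outer normal has positive last
coordinate. -/
def IsUpperFacet (S F : Set (Fin (d + 1) → ℝ)) : Prop :=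
  ∃ (a : Fin (d + 1) → ℝ) (b : ℝ), (∀ x ∈ S, a ⬝ᵥ x ≤ b) ∧ F = {x ∈ S | a ⬝ᵥ x = b} ∧
    Module.finrank ℝ ↥(vectorSpan ℝ F) = d ∧ 0 < a (Fin.last d)

lemma minner_vecMulVec (X : Md d) (hX : X.IsSymm) (a : Fin d → ℝ) :
    minner (vecMulVec a a) X = qf X a := by
  unfold minner qf
  simp only [Matrix.trace, Matrix.diag, Matrix.mul_apply, vecMulVec_apply, dotProduct,
    Matrix.mulVec, Finset.mul_sum]
  rw [Finset.sum_comm]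
  refine Finset.sum_congr rfl fun j _ => Finset.sum_congr rfl fun i _ => ?_
  rw [hX.apply i j]
  ring

lemma minner_sub' (A B X : Md d) : minner (A - B) X = minner A X - minner B X := by
  unfold minner
  rw [Matrix.sub_mul, Matrix.trace_sub]

lemma minner_Nform (X : Md d) (hX : X.IsSymm) (W : Finset (Fin d → ℝ))
    (α : (Fin d → ℝ) → ℝ) (u : Fin d → ℝ) :
    minner (Nform W α u) X = qf X u - ∑ v ∈ W, α v * qf X v := by
  unfold Nform minner
  rw [Matrix.sub_mul, Matrix.trace_sub, Finset.sum_mul, Matrix.trace_sum]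
  have h1 : (vecMulVec u u * X).trace = qf X u := minner_vecMulVec X hX u
  rw [h1]
  congr 1
  refine Finset.sum_congr rfl fun v _ => ?_
  rw [smul_mul_assoc, Matrix.trace_smul, smul_eq_mul]
  congr 1
  exact minner_vecMulVec X hX v

/-- The hyperplane `{x | a ⬝ᵥ x = b}` as an affine subspace. -/
def hplane (a : Fin d → ℝ) (b : ℝ) : AffineSubspace ℝ (Fin d → ℝ) where
  carrier := {x | a ⬝ᵥ x = b}
  smul_vsub_vadd_mem' c {u v z} hu hv hz := by
    simp only [Set.mem_setOf_eq] at hu hv hz ⊢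
    have : a ⬝ᵥ (c • (u -ᵥ v) +ᵥ z) = c * (a ⬝ᵥ u - a ⬝ᵥ v) + a ⬝ᵥ z := by
      simp [vsub_eq_sub, vadd_eq_add, dotProduct_add, dotProduct_sub, dotProduct_smul,
        smul_eq_mul]
    rw [this, hu, hv, hz]
    ring

lemma mem_finsert {w v : Fin d → ℝ} {V : Finset (Fin d → ℝ)} :
    v ∈ finsert w V ↔ v = w ∨ v ∈ V := by
  unfold finsert
  exact @Finset.mem_insert _ (Classical.decEq _) _ _ _

lemma finsert_eq (w : Fin d → ℝ) (V : Finset (Fin d → ℝ)) :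
    finsert w V = insert w V := by
  ext x
  rw [Finset.mem_insert]
  exact mem_finsert

lemma affIndep_finsert {V : Finset (Fin d → ℝ)} {w : Fin d → ℝ} (hVi : AffIndep V)
    (hw : w ∉ affineSpan ℝ (↑V : Set (Fin d → ℝ))) : AffIndep (finsert w V) := by
  have hwV : w ∉ V := fun h => hw (mem_affineSpan ℝ (by exact_mod_cast h))
  set W : Finset (Fin d → ℝ) := finsert w V with hW
  have hwW : w ∈ W := mem_finsert.mpr (Or.inl rfl)
  set i : {x // x ∈ W} := ⟨w, hwW⟩ with hi
  apply AffineIndependent.affineIndependent_of_notMem_span (i := i)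
  · -- the family without `i` is affinely independent
    have hf : ∀ y : {y : {x // x ∈ W} // y ≠ i}, (y : {x // x ∈ W}).1 ∈ V := by
      rintro ⟨⟨x, hxW⟩, hxi⟩
      rcases mem_finsert.mp hxW with h | h
      · exact absurd (Subtype.ext h) hxi
      · exact h
    let f : {y : {x // x ∈ W} // y ≠ i} ↪ {x // x ∈ V} :=
      ⟨fun y => ⟨(y : {x // x ∈ W}).1, hf y⟩, by
        rintro ⟨⟨x, hx⟩, hxi⟩ ⟨⟨x', hx'⟩, hx'i⟩ h
        simp only [Subtype.mk.injEq] at h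
        exact Subtype.ext (Subtype.ext h)⟩
    exact hVi.comp_embedding f
  · -- `w` is not in the span of the rest
    intro hmem
    apply hw
    have hsub : (fun x : {x // x ∈ W} => (x : Fin d → ℝ)) '' {x | x ≠ i} ⊆
        (↑V : Set (Fin d → ℝ)) := by
      rintro _ ⟨⟨x, hxW⟩, hxi, rfl⟩
      rcases mem_finsert.mp hxW with h | h
      · exact absurd (Subtype.ext h) hxi
      · exact_mod_cast h
    exact affineSpan_mono ℝ hsub hmem

lemma affComb_unique {W : Finset (Fin d → ℝ)} (hWi : AffIndep W) {u : Fin d → ℝ}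
    {β₁ β₂ : (Fin d → ℝ) → ℝ} (h₁ : IsAffComb W β₁ u) (h₂ : IsAffComb W β₂ u) :
    ∀ v ∈ W, β₁ v = β₂ v := by
  obtain ⟨hs₁, hp₁⟩ := h₁
  obtain ⟨hs₂, hp₂⟩ := h₂
  set p : {x // x ∈ W} → (Fin d → ℝ) := fun v => (v : Fin d → ℝ) with hp
  have hsum₁ : ∑ i : {x // x ∈ W}, β₁ (p i) = 1 := by
    rw [Finset.sum_coe_sort W (fun v => β₁ v)]; exact hs₁
  have hsum₂ : ∑ i : {x // x ∈ W}, β₂ (p i) = 1 := by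
    rw [Finset.sum_coe_sort W (fun v => β₂ v)]; exact hs₂
  have hcomb : Finset.univ.affineCombination ℝ p (fun i => β₁ (p i)) =
      Finset.univ.affineCombination ℝ p (fun i => β₂ (p i)) := by
    rw [Finset.univ.affineCombination_eq_linear_combination p _ hsum₁,
      Finset.univ.affineCombination_eq_linear_combination p _ hsum₂]
    have e₁ : ∑ i : {x // x ∈ W}, β₁ (p i) • p i = ∑ v ∈ W, β₁ v • v :=
      Finset.sum_coe_sort W (fun v => β₁ v • v)
    have e₂ : ∑ i : {x // x ∈ W}, β₂ (p i) • p i = ∑ v ∈ W, β₂ v • v :=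
      Finset.sum_coe_sort W (fun v => β₂ v • v)
    rw [e₁, e₂, hp₁, hp₂]
  have := (affineIndependent_iff_eq_of_fintype_affineCombination_eq ℝ p).mp hWi
    (fun i => β₁ (p i)) (fun i => β₂ (p i)) hsum₁ hsum₂ hcomb
  intro v hv
  exact congrFun this ⟨v, hv⟩

lemma exists_affComb {W : Finset (Fin d → ℝ)} (hWi : AffIndep W) (hWc : W.card = d + 1) :
    ∃ c : (Fin d → ℝ) → (Fin d → ℝ) → ℝ, ∀ u, IsAffComb W (c u) u := by
  classical
  set p : {x // x ∈ W} → (Fin d → ℝ) := fun v => (v : Fin d → ℝ) with hp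
  have htop : affineSpan ℝ (Set.range p) = ⊤ := by
    rw [hWi.affineSpan_eq_top_iff_card_eq_finrank_add_one]
    rw [Fintype.card_coe, hWc, Module.finrank_fin_fun]
  let b : AffineBasis {x // x ∈ W} ℝ (Fin d → ℝ) := ⟨p, hWi, htop⟩
  refine ⟨fun u v => if h : v ∈ W then b.coord ⟨v, h⟩ u else 0, fun u => ?_⟩
  have hcoe : ∀ (g : {x // x ∈ W} → ℝ),
      (∑ v ∈ W, (if h : v ∈ W then g ⟨v, h⟩ else 0)) = ∑ i : {x // x ∈ W}, g i := by
    intro g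
    rw [← Finset.sum_coe_sort W (fun v => if h : v ∈ W then g ⟨v, h⟩ else 0)]
    exact Finset.sum_congr rfl fun i _ => by rw [dif_pos i.2]
  have hsum : (∑ v ∈ W, (if h : v ∈ W then b.coord ⟨v, h⟩ u else 0)) = 1 := by
    rw [hcoe (fun i => b.coord i u)]
    exact b.sum_coord_apply_eq_one u
  constructor
  · exact hsum
  · have hcoe' : (∑ v ∈ W, (if h : v ∈ W then b.coord ⟨v, h⟩ u else 0) • v) =
        ∑ i : {x // x ∈ W}, b.coord i u • p i := by
      rw [← Finset.sum_coe_sort W (fun v => (if h : v ∈ W then b.coord ⟨v, h⟩ u else 0) • v)]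
      exact Finset.sum_congr rfl fun i _ => by rw [dif_pos i.2]
    rw [hcoe']
    have h1 : ∑ i : {x // x ∈ W}, b.coord i u = 1 := b.sum_coord_apply_eq_one u
    have h2 := b.affineCombination_coord_eq_self u
    rwa [Finset.univ.affineCombination_eq_linear_combination _ _ h1] at h2

/-- For a facet `F` of a `d`-dimensional polyhedron `P`, the projection of
`N_{V∪{w},w'}` onto the subspace `U` cut out by the equalities of `P` does not depend on
the choice of the affinely independent `d`-subset `V` of the vertices of `F`:
equivalently, the difference of two such forms is orthogonal to `U`. -/
theorem statement6 (d : ℕ) (Λ : Set (Fin d → ℝ)) (hΛ : IsStdPeriodic Λ)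
    (P : Set (Fin d → ℝ)) (hPpoly : IsPolyhedron P) (hPdim : sdim P = d)
    (hPvert : P = convexHull ℝ (Λ ∩ P))
    (F : Set (Fin d → ℝ)) (hF : IsFaceOf F P) (hFdim : sdim F = d - 1)
    (V V' : Finset (Fin d → ℝ))
    (hV : (↑V : Set (Fin d → ℝ)) ⊆ Λ ∩ F) (hV' : (↑V' : Set (Fin d → ℝ)) ⊆ Λ ∩ F)
    (hVi : AffIndep V) (hVi' : AffIndep V') (hVc : V.card = d) (hVc' : V'.card = d)
    (w : Fin d → ℝ) (hw : w ∈ (Λ ∩ P) \ F) (w' : Fin d → ℝ)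
    (α α' : (Fin d → ℝ) → ℝ)
    (hα : IsAffComb (finsert w V) α w') (hα' : IsAffComb (finsert w V') α' w') :
    ∀ X : Md d, X.IsSymm →
      (∀ W : Finset (Fin d → ℝ), (↑W : Set (Fin d → ℝ)) ⊆ Λ ∩ P → AffIndep W →
        W.card = d + 1 → ∀ u ∈ Λ ∩ P, ∀ β : (Fin d → ℝ) → ℝ, IsAffComb W β u →
          minner (Nform W β u) X = 0) →
      minner (Nform (finsert w V) α w' - Nform (finsert w V') α' w') X = 0 := by
  intro X hX hcond
  obtain ⟨a, b, haP, hFeq⟩ := hF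
  obtain ⟨⟨hwΛ, hwP⟩, hwF⟩ := hw
  have hFP : F ⊆ P := by rw [hFeq]; exact fun x hx => hx.1
  have hwa : a ⬝ᵥ w ≠ b := fun h => hwF (hFeq ▸ ⟨hwP, h⟩)
  -- `w` is not in the affine span of `V`
  have hwspan : w ∉ affineSpan ℝ (↑V : Set (Fin d → ℝ)) := by
    intro hmem
    apply hwa
    have hVS : (↑V : Set (Fin d → ℝ)) ⊆ (hplane a b : Set (Fin d → ℝ)) := by
      intro v hv
      have hvF : v ∈ F := (hV hv).2
      rw [hFeq] at hvF
      exact hvF.2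
    exact affineSpan_le.mpr hVS hmem
  have hwV : w ∉ V := fun h => hwF (hV h).2
  set W : Finset (Fin d → ℝ) := finsert w V with hWdef
  set W' : Finset (Fin d → ℝ) := finsert w V' with hW'def
  have hWi : AffIndep W := affIndep_finsert hVi hwspan
  have hWc : W.card = d + 1 := by
    rw [hWdef, finsert_eq, Finset.card_insert_of_notMem hwV, hVc]
  have hWsub : (↑W : Set (Fin d → ℝ)) ⊆ Λ ∩ P := by
    intro v hv
    rcases mem_finsert.mp hv with h | h
    · subst h; exact ⟨hwΛ, hwP⟩
    · exact ⟨(hV h).1, hFP (hV h).2⟩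
  have hW'sub : ∀ v ∈ W', v ∈ Λ ∩ P := by
    intro v hv
    rcases mem_finsert.mp hv with h | h
    · subst h; exact ⟨hwΛ, hwP⟩
    · exact ⟨(hV' h).1, hFP (hV' h).2⟩
  -- barycentric coordinates with respect to `W`
  obtain ⟨c, hc⟩ := exists_affComb hWi hWc
  -- the quadratic form agrees with its affine interpolation on `Λ ∩ P`
  have hf : ∀ u ∈ Λ ∩ P, qf X u = ∑ v ∈ W, c u v * qf X v := by
    intro u hu
    have h0 := hcond W hWsub hWi hWc u hu (c u) (hc u)
    rw [minner_Nform X hX] at h0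
    linarith
  -- the combined weights
  set γ : (Fin d → ℝ) → ℝ := fun v => ∑ v' ∈ W', α' v' * c v' v with hγdef
  have hγsum : ∑ v ∈ W, γ v = 1 := by
    calc ∑ v ∈ W, γ v = ∑ v ∈ W, ∑ v' ∈ W', α' v' * c v' v := rfl
      _ = ∑ v' ∈ W', ∑ v ∈ W, α' v' * c v' v := Finset.sum_comm
      _ = ∑ v' ∈ W', α' v' * ∑ v ∈ W, c v' v := by
          refine Finset.sum_congr rfl fun v' _ => ?_
          rw [Finset.mul_sum]
      _ = ∑ v' ∈ W', α' v' * 1 := by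
          refine Finset.sum_congr rfl fun v' _ => ?_
          rw [(hc v').1]
      _ = 1 := by simpa using hα'.1
  have hγpt : ∑ v ∈ W, γ v • v = w' := by
    calc ∑ v ∈ W, γ v • v = ∑ v ∈ W, ∑ v' ∈ W', (α' v' * c v' v) • v := by
          refine Finset.sum_congr rfl fun v _ => ?_
          rw [Finset.sum_smul]
      _ = ∑ v' ∈ W', ∑ v ∈ W, (α' v' * c v' v) • v := Finset.sum_comm
      _ = ∑ v' ∈ W', α' v' • ∑ v ∈ W, c v' v • v := by
          refine Finset.sum_congr rfl fun v' _ => ?_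
          rw [Finset.smul_sum]
          refine Finset.sum_congr rfl fun v _ => ?_
          rw [smul_smul]
      _ = ∑ v' ∈ W', α' v' • v' := by
          refine Finset.sum_congr rfl fun v' _ => ?_
          rw [(hc v').2]
      _ = w' := hα'.2
  have hγα : ∀ v ∈ W, γ v = α v := affComb_unique hWi ⟨hγsum, hγpt⟩ hα
  -- conclude
  rw [minner_sub', minner_Nform X hX, minner_Nform X hX]
  have hkey : ∑ v' ∈ W', α' v' * qf X v' = ∑ v ∈ W, α v * qf X v := by
    calc ∑ v' ∈ W', α' v' * qf X v'
        = ∑ v' ∈ W', α' v' * ∑ v ∈ W, c v' v * qf X v := by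
          refine Finset.sum_congr rfl fun v' hv' => ?_
          rw [← hf v' (hW'sub v' hv')]
      _ = ∑ v' ∈ W', ∑ v ∈ W, (α' v' * c v' v) * qf X v := by
          refine Finset.sum_congr rfl fun v' _ => ?_
          rw [Finset.mul_sum]
          refine Finset.sum_congr rfl fun v _ => ?_
          ring
      _ = ∑ v ∈ W, ∑ v' ∈ W', (α' v' * c v' v) * qf X v := Finset.sum_comm
      _ = ∑ v ∈ W, γ v * qf X v := by
          refine Finset.sum_congr rfl fun v _ => ?_
          rw [← Finset.sum_mul]
      _ = ∑ v ∈ W, α v * qf X v := by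
          refine Finset.sum_congr rfl fun v hv => ?_
          rw [hγα v hv]
  rw [hkey]
  ring

end Vor

end
end

section
/- Let Q be a positive definite quadratic form on ℝ^d with inner product (x,y) = xᵗQy, and let L = conv{0, v_1, …, v_d} ⊆ ℝ^d be a d-dimensional simplex. Then the circumradius of L with respect to (·,·) is at most 1 if and only if the (d+1)×(d+1) matrix BR_L(Q), whose (1,1)-entry is 4, whose remaining first-row and first-column entries are (v_i, v_i) for i = 1, …, d, and whose remaining (i+1, j+1)-entries are (v_i, v_j), is positive semidefinite. -/
open Matrix Finset MeasureTheory Polynomial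

noncomputable section

namespace Vor

variable {d : ℕ}

/-- The `(d+1) × (d+1)` matrix `BR_L(Q)` of a simplex `L = conv{0, v₁, …, v_d}`:
its `(1,1)`-entry is `4`, remaining first row/column entries are `(vᵢ, vᵢ)`, and
remaining entries are `(vᵢ, vⱼ)`, where `(x, y) = xᵗ Q y`. -/
def BRmat (Q : Md d) (v : Fin d → (Fin d → ℝ)) :
    Matrix (Fin (d + 1)) (Fin (d + 1)) ℝ :=
  Matrix.of fun i j =>
    if hi : i = 0 then
      (if hj : j = 0 then 4 else bip Q (v (j.pred hj)) (v (j.pred hj)))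
    else if hj : j = 0 then bip Q (v (i.pred hi)) (v (i.pred hi))
    else bip Q (v (i.pred hi)) (v (j.pred hj))

/-!
Call `c` a circumcenter of `L` if it is equidistant from `0` and all `vᵢ`, i.e.
`2 (c, vᵢ) = (vᵢ, vᵢ)`. For such `c` and `w = ∑ αᵢ vᵢ`, the quadratic form of `BR_L(Q)` at
`(t, α)` is the completed square `(w + 2tc, w + 2tc) + 4t² (1 - (c, c))`. It is nonnegative when
`(c, c) ≤ 1`, and at `t = 1/2`, `w = -c` it equals `1 - (c, c)`. A circumcenter always exists
because the `vᵢ` form a basis and `Q` is nondegenerate.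
-/

section Bilinear

variable {Q : Md d}

theorem bip_comm (hQ : Q.IsSymm) (x y : Fin d → ℝ) : bip Q x y = bip Q y x := by
  rw [bip, bip, dotProduct_mulVec, ← mulVec_transpose, hQ.eq, dotProduct_comm]

theorem bip_sum {ι : Type*} [Fintype ι] (Q : Md d) (x : Fin d → ℝ) (α : ι → ℝ)
    (v : ι → Fin d → ℝ) : bip Q x (∑ i, α i • v i) = ∑ i, α i * bip Q x (v i) := by
  simp only [bip, mulVec_sum, mulVec_smul, dotProduct_sum, dotProduct_smul, smul_eq_mul]

theorem sum_bip {ι : Type*} [Fintype ι] (Q : Md d) (α : ι → ℝ) (v : ι → Fin d → ℝ)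
    (y : Fin d → ℝ) : bip Q (∑ i, α i • v i) y = ∑ i, α i * bip Q (v i) y := by
  simp only [bip, sum_dotProduct, smul_dotProduct, smul_eq_mul]

theorem bip_smul (Q : Md d) (x y : Fin d → ℝ) (t : ℝ) : bip Q x (t • y) = t * bip Q x y := by
  simp only [bip, mulVec_smul, dotProduct_smul, smul_eq_mul]

theorem qf_eq_bip (Q : Md d) (x : Fin d → ℝ) : qf Q x = bip Q x x := rfl

theorem qf_sum {ι : Type*} [Fintype ι] (Q : Md d) (α : ι → ℝ) (v : ι → Fin d → ℝ) :
    qf Q (∑ i, α i • v i) = ∑ i, ∑ j, α i * α j * bip Q (v i) (v j) := by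
  simp only [qf_eq_bip, bip_sum, sum_bip, Finset.mul_sum]
  rw [Finset.sum_comm]
  refine Finset.sum_congr rfl fun i _ => Finset.sum_congr rfl fun j _ => by ring

theorem qf_add (hQ : Q.IsSymm) (x y : Fin d → ℝ) :
    qf Q (x + y) = qf Q x + 2 * bip Q x y + qf Q y := by
  have := bip_comm hQ y x
  simp only [qf, bip, mulVec_add, dotProduct_add, add_dotProduct] at this ⊢
  linarith

theorem qf_sub (hQ : Q.IsSymm) (x y : Fin d → ℝ) :
    qf Q (x - y) = qf Q x - 2 * bip Q x y + qf Q y := by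
  have := bip_comm hQ y x
  simp only [qf, bip, mulVec_sub, dotProduct_sub, sub_dotProduct] at this ⊢
  linarith

theorem qf_smul (Q : Md d) (t : ℝ) (x : Fin d → ℝ) : qf Q (t • x) = t ^ 2 * qf Q x := by
  simp only [qf, mulVec_smul, dotProduct_smul, smul_dotProduct, smul_eq_mul]
  ring

@[simp]
theorem qf_zero (Q : Md d) : qf Q 0 = 0 := by
  simp [qf]

theorem qf_nonneg (hQ : Q.PosSemidef) (x : Fin d → ℝ) : 0 ≤ qf Q x := by
  simpa [qf] using hQ.dotProduct_mulVec_nonneg x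

theorem qf_sub_eq_qf_iff (hQ : Q.IsSymm) (c x : Fin d → ℝ) :
    qf Q (c - x) = qf Q c ↔ qf Q x = 2 * bip Q c x := by
  rw [qf_sub hQ]
  constructor <;> intro h <;> linarith

theorem exists_forall_bip_eq (hQ : IsUnit Q) {v : Fin d → Fin d → ℝ}
    (hv : LinearIndependent ℝ v) (b : Fin d → ℝ) : ∃ c, ∀ i, bip Q c (v i) = b i := by
  have hV : IsUnit (of v) := linearIndependent_rows_iff_isUnit.mp hv
  obtain ⟨c, hc⟩ : ∃ c, c ᵥ* (Q * (of v)ᵀ) = b :=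
    vecMul_surjective_iff_isUnit.mpr (hQ.mul ((isUnit_transpose _).mpr hV)) b
  refine ⟨c, fun i => ?_⟩
  rw [bip, dotProduct_mulVec, dotProduct_comm, ← hc, ← vecMul_vecMul, vecMul_transpose]
  rfl

end Bilinear

section BRmat

variable {Q : Md d} {v : Fin d → Fin d → ℝ} {c : Fin d → ℝ}

theorem BRmat_isHermitian (hQ : Q.IsSymm) (v : Fin d → Fin d → ℝ) :
    (BRmat Q v).IsHermitian := by
  refine isHermitian_iff_isSymm.mpr (IsSymm.ext fun i j => ?_)
  cases i using Fin.cases <;> cases j using Fin.cases <;> simp [BRmat, bip_comm hQ]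

theorem cons_dotProduct_BRmat_mulVec (Q : Md d) (v : Fin d → Fin d → ℝ) (t : ℝ)
    (α : Fin d → ℝ) : Fin.cons t α ⬝ᵥ BRmat Q v *ᵥ Fin.cons t α =
      4 * t ^ 2 + 2 * t * ∑ i, α i * qf Q (v i) + qf Q (∑ i, α i • v i) := by
  rw [qf_sum]
  simp only [dotProduct, mulVec, Fin.sum_univ_succ, BRmat, of_apply, Fin.cons_zero,
    Fin.cons_succ, dite_true, Fin.succ_ne_zero, dite_false, Fin.pred_succ, ← qf_eq_bip]
  simp only [mul_add, Finset.mul_sum, Finset.sum_add_distrib]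
  have hcross : ∑ i, 2 * t * (α i * qf Q (v i)) =
      ∑ i, t * (qf Q (v i) * α i) + ∑ i, α i * (qf Q (v i) * t) := by
    rw [← Finset.sum_add_distrib]
    exact Finset.sum_congr rfl fun i _ => by ring
  have hquad : ∑ i, ∑ j, α i * (bip Q (v i) (v j) * α j) =
      ∑ i, ∑ j, α i * α j * bip Q (v i) (v j) :=
    Finset.sum_congr rfl fun i _ => Finset.sum_congr rfl fun j _ => by ring
  rw [hcross, hquad]
  ring

theorem cons_dotProduct_BRmat_mulVec_eq_of_circumcenter (hQ : Q.IsSymm)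
    (hc : ∀ i, qf Q (v i) = 2 * bip Q c (v i)) (t : ℝ) (α : Fin d → ℝ) :
    Fin.cons t α ⬝ᵥ BRmat Q v *ᵥ Fin.cons t α =
      qf Q (∑ i, α i • v i + (2 * t) • c) + 4 * t ^ 2 * (1 - qf Q c) := by
  have hcross : ∑ i, α i * qf Q (v i) = 2 * bip Q (∑ i, α i • v i) c := by
    rw [sum_bip, Finset.mul_sum]
    exact Finset.sum_congr rfl fun i _ => by rw [hc, bip_comm hQ c]; ring
  rw [cons_dotProduct_BRmat_mulVec, hcross, qf_add hQ, qf_smul, bip_smul]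
  ring

theorem posSemidef_BRmat_of_circumcenter (hQ : Q.PosSemidef)
    (hc : ∀ i, qf Q (v i) = 2 * bip Q c (v i)) (hc1 : qf Q c ≤ 1) :
    (BRmat Q v).PosSemidef := by
  have hQs : Q.IsSymm := isHermitian_iff_isSymm.mp hQ.isHermitian
  refine .of_dotProduct_mulVec_nonneg (BRmat_isHermitian hQs v) fun y => ?_
  rw [star_trivial, ← Fin.cons_self_tail y,
    cons_dotProduct_BRmat_mulVec_eq_of_circumcenter hQs hc]
  exact add_nonneg (qf_nonneg hQ _) (mul_nonneg (by positivity) (sub_nonneg.2 hc1))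

theorem qf_le_one_of_posSemidef_BRmat (hQ : Q.IsSymm) (hv : LinearIndependent ℝ v)
    (hc : ∀ i, qf Q (v i) = 2 * bip Q c (v i)) (hBR : (BRmat Q v).PosSemidef) : qf Q c ≤ 1 := by
  obtain ⟨α, hα⟩ : ∃ α : Fin d → ℝ, ∑ i, α i • v i = -c :=
    (Submodule.mem_span_range_iff_exists_fun ℝ).mp
      (hv.span_eq_top_of_card_eq_finrank' (by simp) ▸ Submodule.mem_top)
  have h := hBR.dotProduct_mulVec_nonneg (Fin.cons (1 / 2) α)
  rw [star_trivial, cons_dotProduct_BRmat_mulVec_eq_of_circumcenter hQ hc, hα] at h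
  norm_num at h
  linarith

end BRmat

/-- For a positive definite `Q` and a `d`-simplex
`L = conv{0, v₁, …, v_d}`, the circumradius of `L` with respect to `(x,y) = xᵗQy` is at
most `1` if and only if `BR_L(Q)` is positive semidefinite. -/
theorem statement16 (d : ℕ) (Q : Md d) (hQ : Q.PosDef)
    (v : Fin d → (Fin d → ℝ)) (hv : LinearIndependent ℝ v) :
    (∃ c : Fin d → ℝ, (∀ i, qf Q (c - v i) = qf Q c) ∧ qf Q c ≤ 1) ↔
      (BRmat Q v).PosSemidef := by
  have hQs : Q.IsSymm := isHermitian_iff_isSymm.mp hQ.isHermitian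
  simp_rw [qf_sub_eq_qf_iff hQs]
  constructor
  · rintro ⟨c, hc, hc1⟩
    exact posSemidef_BRmat_of_circumcenter hQ.posSemidef hc hc1
  · intro hBR
    obtain ⟨c, hc⟩ := exists_forall_bip_eq hQ.isUnit hv fun i => qf Q (v i) / 2
    have hc' : ∀ i, qf Q (v i) = 2 * bip Q c (v i) := fun i => by rw [hc]; ring
    exact ⟨c, hc', qf_le_one_of_posSemidef_BRmat hQs hv hc' hBR⟩

end Vor

end
end
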